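/- In any coop, a/2 + b/2 ≥ (a + b)/2 and a/2 → b/2 = (a → b)/2. -/
import Mathlib


/-- A pocrim: commutative monoid (z, ad) with residuation operation im,
    ordered by `x ≥ y iff im x y = z`. -/
class Pocrim (M : Type*) where
  z : M
  ad : M → M → M
  im : M → M → M
  ad_assoc : ∀ x y w : M, ad (ad x y) w = ad x (ad y w)
  ad_comm : ∀ x y : M, ad x y = ad y x
  ad_zero : ∀ x : M, ad x z = x
  ge_refl : ∀ x : M, im x x = z
  ge_trans : ∀ x y w : M, im x y = z → im y w = z → im x w = z
  ge_antisymm : ∀ x y : M, im x y = z → im y x = z → x = y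
  ad_mono : ∀ x y w : M, im x y = z → im (ad x w) (ad y w) = z
  ge_zero : ∀ x : M, im x z = z
  resid : ∀ x y w : M, (im (ad x y) w = z ↔ im x (im y w) = z)

namespace Pocrim

variable {M : Type*} [Pocrim M]

/-- `ge x y` means x ≥ y, i.e. x → y = 0. -/
def ge (x y : M) : Prop := im x y = z

end Pocrim

open Pocrim

/-- A hoop is a pocrim satisfying x + (x → y) = y + (y → x). -/
class Hoop (M : Type*) extends Pocrim M where
  cwc : ∀ x y : M, ad x (im x y) = ad y (im y x)

/-- A coop is a hoop with a halving operation satisfying x/2 = x/2 → x. -/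
class Coop (M : Type*) extends Hoop M where
  half : M → M
  half_ax : ∀ x : M, half x = im (half x) x

open Coop

section Aux

variable {M : Type*}

section PocrimAux
variable [Pocrim M]

theorem geAddL (x y : M) : ge (ad x y) x := by
  show im (ad x y) x = z
  rw [ad_comm]
  exact (resid y x x).mpr (by rw [Pocrim.ge_refl, Pocrim.ge_zero])

/-- counit : (y → w) + y ≥ w -/
theorem counit (y w : M) : ge (ad (im y w) y) w :=
  (resid (im y w) y w).mpr (Pocrim.ge_refl _)

/-- b ≥ a → b -/
theorem imLe (a b : M) : ge b (im a b) :=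
  (resid b a b).mp (geAddL b a)

/-- currying of residuation as an equation -/
theorem curry (x y w : M) : im (ad x y) w = im x (im y w) := by
  apply Pocrim.ge_antisymm
  · have h1 : im (ad (im (ad x y) w) (ad x y)) w = z :=
      (resid _ _ _).mpr (Pocrim.ge_refl _)
    have h2 : im (ad (ad (im (ad x y) w) x) y) w = z := by
      rw [ad_assoc]; exact h1
    exact (resid _ _ _).mp ((resid _ _ _).mp h2)
  · have h1 : im (ad (im x (im y w)) x) (im y w) = z :=
      (resid _ _ _).mpr (Pocrim.ge_refl _)
    have h2 : im (ad (ad (im x (im y w)) x) y) w = z := (resid _ _ _).mpr h1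
    have h3 : im (ad (im x (im y w)) (ad x y)) w = z := by
      rw [← ad_assoc]; exact h2
    exact (resid _ _ _).mp h3

theorem adMonoR {a b : M} (c : M) (h : ge a b) : ge (ad c a) (ad c b) := by
  show im (ad c a) (ad c b) = z
  rw [ad_comm c a, ad_comm c b]
  exact Pocrim.ad_mono a b c h

theorem adMono2 {a b c d : M} (h1 : ge a b) (h2 : ge c d) :
    ge (ad a c) (ad b d) :=
  Pocrim.ge_trans _ _ _ (Pocrim.ad_mono a b c h1) (adMonoR b h2)

/-- im is monotone in its second argument -/
theorem imMono2 (c : M) {a b : M} (h : ge a b) : ge (im c a) (im c b) :=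
  (resid (im c a) c b).mp (Pocrim.ge_trans _ _ _ (counit c a) h)

/-- subadditivity : x + (a → y) ≥ a → (x + y) -/
theorem subadd (a x y : M) : ge (ad x (im a y)) (im a (ad x y)) := by
  apply (resid _ _ _).mp
  show im (ad (ad x (im a y)) a) (ad x y) = z
  rw [ad_assoc]
  exact adMonoR x (counit a y)

end PocrimAux

section HoopAux
variable [Hoop M]

/-- THE KEY LEMMA: if X + X ≥ H + H and H = H → (H + H), then X ≥ H. -/
theorem keyLemma (X H : M) (hH : im H (ad H H) = H)
    (hX : ge (ad X X) (ad H H)) : ge X H := by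
  set T := ad H H with hT
  -- c := X → T ; X ≥ c
  have hXc : ge X (im X T) := (resid X X T).mp hX
  set c : M := im X T with hc
  -- Y := c → T, a "truncation" of X below T
  set Y : M := im c T with hY
  -- Y + X ≥ T
  have hYXT : ge (ad Y X) T :=
    Pocrim.ge_trans _ (ad Y c) _ (adMonoR Y hXc) (counit c T)
  -- X ≥ Y
  have hXY : ge X Y := by
    show im X Y = z
    rw [hY, ← curry, ad_comm X c]
    exact counit X T
  -- Y ≥ c
  have hYc : ge Y c := by
    show im Y c = z
    rw [hc, ← curry]
    exact hYXT
  -- Y + Y ≥ T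
  have hYYT : ge (ad Y Y) T :=
    Pocrim.ge_trans _ (ad Y c) _ (adMonoR Y hYc) (counit c T)
  -- T ≥ Y
  have hTY : ge T Y := imLe c T
  -- e := H → Y, d := Y → H, f := e → H
  set e : M := im H Y with he
  set d : M := im Y H with hd
  set f : M := im e H with hf
  -- step 2 : Y + e ≥ H
  have step2 : ge (ad Y e) H := by
    have h1 := imMono2 H hYYT
    rw [hH] at h1
    exact Pocrim.ge_trans _ (im H (ad Y Y)) _ (subadd H Y Y) h1
  -- step 3 : e ≥ d
  have step3 : ge e d := by
    have h1 : ge (im Y (ad Y e)) d := imMono2 Y step2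
    have h2 := subadd Y e Y
    rw [Pocrim.ge_refl, ad_zero, ad_comm e Y] at h2
    exact Pocrim.ge_trans _ _ _ h2 h1
  -- step 4 : H ≥ e
  have step4 : ge H e := by
    show im H e = z
    rw [he, ← resid H H Y]
    show im T Y = z
    exact hTY
  -- step 5 : e + f = H
  have step5 : ad e f = H := by
    have h1 := Hoop.cwc e H
    rw [show im H e = z from step4, ad_zero] at h1
    exact h1
  -- step 6 : Y + d = H + e
  have step6 : ad Y d = ad H e := Hoop.cwc Y H
  -- step 7 : Y + H ≥ T
  have step7 : ge (ad Y H) T := by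
    have h1 : ge (ad Y (ad e f)) (ad Y (ad d f)) :=
      adMonoR Y (Pocrim.ad_mono e d f step3)
    rw [step5] at h1
    have h2 : ad Y (ad d f) = T := by
      rw [← ad_assoc, step6, ad_assoc, step5, hT]
    rw [h2] at h1
    exact h1
  -- Y ≥ H
  have hYH : ge Y H := by
    show im Y H = z
    rw [← hH, ← curry]
    exact step7
  exact Pocrim.ge_trans _ _ _ hXY hYH

/-- rearrangement: (x+y) + (x+y) = (x+x) + (y+y) -/
theorem addSwap (x y : M) : ad (ad x y) (ad x y) = ad (ad x x) (ad y y) := by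
  rw [ad_assoc x y (ad x y), ← ad_assoc y x y, ad_comm y x, ad_assoc x y y,
    ← ad_assoc]

end HoopAux

section CoopAux
variable [Coop M]

/-- x ≥ x/2 -/
theorem geHalf (x : M) : ge x (half x) := by
  show im x (half x) = z
  conv_lhs => rw [half_ax x]
  exact (resid x (half x) x).mp (geAddL x (half x))

/-- x/2 + x/2 = x -/
theorem halfAddSelf (x : M) : ad (half x) (half x) = x := by
  have h1 := Hoop.cwc (half x) x
  rw [← half_ax x, show im x (half x) = z from geHalf x, ad_zero] at h1
  exact h1

/-- the halving equation in the form needed by keyLemma -/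
theorem halfKey (x : M) : im (half x) (ad (half x) (half x)) = half x := by
  rw [halfAddSelf x]
  exact (half_ax x).symm

end CoopAux

end Aux

theorem coop_half_add_im {M : Type*} [Coop M] (a b : M) :
    ge (ad (half a) (half b)) (half (ad a b)) ∧
    im (half a) (half b) = half (im a b) := by
  set p := half a with hp
  set q := half b with hq
  have hpp : ad p p = a := halfAddSelf a
  have hqq : ad q q = b := halfAddSelf b
  constructor
  · -- a/2 + b/2 ≥ (a+b)/2
    apply keyLemma _ _ (halfKey (ad a b))
    have h2 : ad (half (ad a b)) (half (ad a b)) = ad a b := halfAddSelf _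
    rw [h2]
    show im (ad (ad p q) (ad p q)) (ad a b) = z
    rw [addSwap p q, hpp, hqq]
    exact Pocrim.ge_refl _
  · -- a/2 → b/2 = (a → b)/2
    set g := im a b with hg
    set W := half g with hW
    set w : M := im p q with hw
    have hWW : ad W W = g := halfAddSelf g
    -- w + p ≥ q
    have hwpq : ge (ad w p) q := counit p q
    -- direction 1 : w ≥ W, via keyLemma with X := w, H := W
    have dir1 : ge w W := by
      apply keyLemma _ _ (halfKey g)
      show im (ad w w) (ad W W) = z
      rw [hWW, hg, ← resid (ad w w) a b]
      show im (ad (ad w w) a) b = z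
      have h1 : ad (ad w w) a = ad (ad w p) (ad w p) := by
        rw [addSwap w p, hpp]
      rw [h1, ← hqq]
      exact adMono2 hwpq hwpq
    -- direction 2 : W ≥ w, via keyLemma with X := W + p, H := q
    have hWpq : ge (ad W p) q := by
      apply keyLemma _ _ (halfKey b)
      show im (ad (ad W p) (ad W p)) (ad q q) = z
      rw [hqq, addSwap W p, hWW, hpp, hg]
      exact counit a b
    have dir2 : ge W w := by
      show im W w = z
      rw [hw, ← curry]
      exact hWpq
    exact Pocrim.ge_antisymm _ _ dir1 dir2
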